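/- arXiv:2405.00941 — 5 statements merged into one kernel-verified Lean document; each statement's English description precedes it below -/
import Mathlib

section
/- (Landau–Kolmogorov on ℝ) If f : ℝ → ℝ is twice differentiable with ‖f‖_∞ ≤ A and ‖f''‖_∞ ≤ B finite, then ‖f'‖_∞ ≤ 2 √(A·B). -/
open Set

lemma landau_key (f : ℝ → ℝ) (A B : ℝ)
    (hf : ∀ x, DifferentiableAt ℝ f x) (hf' : ∀ x, DifferentiableAt ℝ (deriv f) x)
    (hA : ∀ x, |f x| ≤ A) (hB : ∀ x, |deriv (deriv f) x| ≤ B)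
    (x h : ℝ) (hh : 0 < h) : |deriv f x| ≤ 2 * A / h + B * h / 2 := by
  have hx : x < x + h := by linarith
  have hU : UniqueDiffOn ℝ (Icc x (x + h)) := uniqueDiffOn_Icc hx
  have hC1 : ContDiff ℝ 1 f :=
    contDiff_one_iff_deriv.mpr ⟨fun y => hf y,
      continuous_iff_continuousAt.mpr fun y => (hf' y).continuousAt⟩
  have hgy : ∀ y ∈ Ioo x (x + h),
      iteratedDerivWithin 1 f (Icc x (x + h)) y = deriv f y := by
    intro y hy
    rw [iteratedDerivWithin_one]
    exact derivWithin_of_mem_nhds (Icc_mem_nhds hy.1 hy.2)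
  have hder : DifferentiableOn ℝ (iteratedDerivWithin 1 f (Icc x (x + h)))
      (Ioo x (x + h)) := by
    intro y hy
    exact ((hf' y).differentiableWithinAt).congr (fun z hz => hgy z hz) (hgy y hy)
  obtain ⟨ξ, hξ, htay⟩ := taylor_mean_remainder_lagrange (n := 1) hx.ne
    (by rw [uIcc_of_le hx.le]; exact hC1.contDiffOn)
    (by rw [uIcc_of_le hx.le, uIoo_of_le hx.le]; exact hder)
  rw [uIoo_of_le hx.le] at hξ
  rw [uIcc_of_le hx.le] at htay
  have h2 : iteratedDerivWithin 2 f (Icc x (x + h)) ξ = deriv (deriv f) ξ := by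
    rw [show (2 : ℕ) = 1 + 1 from rfl,
      iteratedDerivWithin_succ,
      derivWithin_of_mem_nhds (Icc_mem_nhds hξ.1 hξ.2)]
    exact Filter.EventuallyEq.deriv_eq
      (Filter.eventuallyEq_of_mem (isOpen_Ioo.mem_nhds hξ) hgy)
  have h1 : iteratedDerivWithin 1 f (Icc x (x + h)) x = deriv f x := by
    rw [iteratedDerivWithin_one]
    exact (hf x).derivWithin (hU x (left_mem_Icc.mpr hx.le))
  simp only [taylorWithinEval_succ, taylor_within_zero_eval, Nat.factorial_zero,
    Nat.cast_zero, Nat.cast_one, h1, h2] at htay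
  -- htay : f (x+h) - (f x + ... * deriv f x) = deriv (deriv f) ξ * (x + h - x)^2 / 2!
  have key : deriv f x * h = f (x + h) - f x - deriv (deriv f) ξ * h ^ 2 / 2 := by
    have := htay
    simp only [add_sub_cancel_left, smul_eq_mul] at this
    have h1' : derivWithin f (Icc x (x + h)) x = deriv f x := by rw [← iteratedDerivWithin_one]; exact h1
    norm_num [h1', h2] at this ⊢
    linarith
  have hb1 : |f (x + h)| ≤ A := hA _
  have hb2 : |f x| ≤ A := hA _
  have hb3 : |deriv (deriv f) ξ| ≤ B := hB _
  have hd : |deriv (deriv f) ξ * h ^ 2 / 2| ≤ B * h ^ 2 / 2 := by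
    rw [abs_div, abs_mul, abs_pow, sq_abs, abs_two]
    have h2' : (0:ℝ) ≤ h ^ 2 := sq_nonneg h
    gcongr
  have habs : |deriv f x| * h ≤ 2 * A + B * h ^ 2 / 2 := by
    have e : |deriv f x| * h = |deriv f x * h| := by rw [abs_mul, abs_of_pos hh]
    rw [e, key]
    have htri := (abs_sub (f (x + h) - f x) (deriv (deriv f) ξ * h ^ 2 / 2)).trans
      (add_le_add (abs_sub (f (x + h)) (f x)) le_rfl)
    linarith [hd, hb1, hb2, htri]
  rw [div_add_div _ _ (ne_of_gt hh) (two_ne_zero), le_div_iff₀ (by positivity)]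
  nlinarith

theorem stmt3 (f : ℝ → ℝ) (A B : ℝ)
    (hf : ∀ x, DifferentiableAt ℝ f x) (hf' : ∀ x, DifferentiableAt ℝ (deriv f) x)
    (hA : ∀ x, |f x| ≤ A) (hB : ∀ x, |deriv (deriv f) x| ≤ B) :
    ∀ x, |deriv f x| ≤ 2 * Real.sqrt (A * B) := by
  intro x
  have hA0 : 0 ≤ A := le_trans (abs_nonneg _) (hA 0)
  have hB0 : 0 ≤ B := le_trans (abs_nonneg _) (hB 0)
  have key := landau_key f A B hf hf' hA hB x
  rcases eq_or_lt_of_le hA0 with hA' | hA'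
  · -- A = 0
    have : ∀ ε > 0, |deriv f x| ≤ 2 * Real.sqrt (A * B) + ε := by
      intro ε hε
      have hh : 0 < 2 * ε / (B + 1) := by positivity
      have := key _ hh
      rw [← hA'] at this ⊢
      have hB1 : 0 < B + 1 := by linarith
      rw [zero_mul, Real.sqrt_zero, mul_zero, zero_add]
      calc |deriv f x| ≤ 2 * 0 / (2 * ε / (B + 1)) + B * (2 * ε / (B + 1)) / 2 := this
        _ = B * ε / (B + 1) := by field_simp; ring
        _ ≤ ε := by rw [div_le_iff₀ hB1]; nlinarith
    exact le_of_forall_pos_le_add this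
  rcases eq_or_lt_of_le hB0 with hB' | hB'
  · -- B = 0
    have : ∀ ε > 0, |deriv f x| ≤ 2 * Real.sqrt (A * B) + ε := by
      intro ε hε
      have hh : 0 < 2 * A / ε := by positivity
      have := key _ hh
      rw [← hB'] at this ⊢
      rw [mul_zero, Real.sqrt_zero, mul_zero, zero_add]
      calc |deriv f x| ≤ 2 * A / (2 * A / ε) + 0 * (2 * A / ε) / 2 := this
        _ = ε := by field_simp; ring
    exact le_of_forall_pos_le_add this
  · -- A > 0, B > 0
    set sA := Real.sqrt A with hsA
    set sB := Real.sqrt B with hsB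
    have hsA0 : 0 < sA := Real.sqrt_pos.mpr hA'
    have hsB0 : 0 < sB := Real.sqrt_pos.mpr hB'
    have hsA2 : sA ^ 2 = A := Real.sq_sqrt hA0
    have hsB2 : sB ^ 2 = B := Real.sq_sqrt hB0
    have hh : 0 < 2 * sA / sB := by positivity
    have hle := key _ hh
    have hprod : Real.sqrt (A * B) = sA * sB := Real.sqrt_mul hA0 B
    rw [hprod]
    calc |deriv f x| ≤ 2 * A / (2 * sA / sB) + B * (2 * sA / sB) / 2 := hle
      _ = 2 * (sA * sB) := by
          rw [← hsA2, ← hsB2]; field_simp; ring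
end

section
/- Let 0 < λ₂ ≤ 1 and 0 < ν₂ < 1 with η λ₂ + (1-η)(ν₂ - 1) = 0 for some η ∈ (0,1). Suppose u : ℝ → ℝ is continuously differentiable with sup norm of u' equal to C_μ > 0, the derivative u' is λ₂-Hölder with seminorm C_λ > 0, and u is ν₂-Hölder with seminorm C_ν. Then C_μ ≤ (1 + 1/λ₂)^{1-η} C_λ^η C_ν^{1-η}. -/
theorem stmt6 (u : ℝ → ℝ) (lam₂ nu₂ η Cmu Cl Cn : ℝ)
    (hl0 : 0 < lam₂) (hl1 : lam₂ ≤ 1) (hn0 : 0 < nu₂) (hn1 : nu₂ < 1)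
    (hη0 : 0 < η) (hη1 : η < 1) (hrel : η * lam₂ + (1 - η) * (nu₂ - 1) = 0)
    (hu : ContDiff ℝ 1 u)
    (hCmu : 0 < Cmu) (hbound : ∀ x, |deriv u x| ≤ Cmu) (hatt : ∃ x, |deriv u x| = Cmu)
    (hCl : 0 < Cl) (hHl : ∀ x y, |deriv u x - deriv u y| ≤ Cl * |x - y| ^ lam₂)
    (hHn : ∀ x y, |u x - u y| ≤ Cn * |x - y| ^ nu₂) :
    Cmu ≤ (1 + 1 / lam₂) ^ (1 - η) * Cl ^ η * Cn ^ (1 - η) := by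
  obtain ⟨x₀, hx₀⟩ := hatt
  have hdiff : Differentiable ℝ u := hu.differentiable one_ne_zero
  have hcont : Continuous (deriv u) := hu.continuous_deriv le_rfl
  -- Cn > 0
  have hCn : 0 < Cn := by
    by_contra hle
    push_neg at hle
    have hconst : ∀ x, u x = u 0 := by
      intro x
      have h1 := hHn x 0
      have h2 : Cn * |x - 0| ^ nu₂ ≤ 0 :=
        mul_nonpos_of_nonpos_of_nonneg hle (Real.rpow_nonneg (abs_nonneg _) _)
      have := abs_nonneg (u x - u 0)
      have : |u x - u 0| = 0 := le_antisymm (h1.trans h2) this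
      have := abs_eq_zero.mp this
      linarith
    have hu0 : u = fun _ => u 0 := funext hconst
    rw [hu0] at hx₀
    simp [deriv_const] at hx₀
    linarith
  -- key inequality for all h > 0
  have key : ∀ h : ℝ, 0 < h →
      Cmu * h ≤ Cl * h ^ (1 + lam₂) / (1 + lam₂) + Cn * h ^ nu₂ := by
    intro h hh
    have hab : x₀ ≤ x₀ + h := by linarith
    have hFTC : ∫ t in x₀..(x₀ + h), deriv u t = u (x₀ + h) - u x₀ :=
      intervalIntegral.integral_deriv_eq_sub (fun t _ => hdiff t)
        (hcont.intervalIntegrable _ _)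
    have hI1 : IntervalIntegrable (fun t => deriv u t - deriv u x₀)
        MeasureTheory.volume x₀ (x₀ + h) :=
      (hcont.sub continuous_const).intervalIntegrable _ _
    have h1 : ∫ t in x₀..(x₀ + h), (deriv u t - deriv u x₀)
        = (u (x₀ + h) - u x₀) - deriv u x₀ * h := by
      rw [intervalIntegral.integral_sub (hcont.intervalIntegrable _ _)
        intervalIntegrable_const, hFTC, intervalIntegral.integral_const]
      simp [smul_eq_mul]
      ring
    have h3 : ∫ t in x₀..(x₀ + h), Cl * (t - x₀) ^ lam₂
        = Cl * (h ^ (1 + lam₂) / (1 + lam₂)) := by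
      rw [intervalIntegral.integral_const_mul,
        intervalIntegral.integral_comp_sub_right (fun s => s ^ lam₂) x₀]
      simp only [sub_self, add_sub_cancel_left]
      rw [integral_rpow (Or.inl (by linarith))]
      rw [Real.zero_rpow (by linarith)]
      ring_nf
    have h2 : |∫ t in x₀..(x₀ + h), (deriv u t - deriv u x₀)|
        ≤ Cl * (h ^ (1 + lam₂) / (1 + lam₂)) := by
      rw [← h3]
      refine (intervalIntegral.abs_integral_le_integral_abs hab).trans ?_
      apply intervalIntegral.integral_mono_on hab hI1.abs
        ((continuous_const.mul ((continuous_id.sub continuous_const).rpow_const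
          (fun _ => Or.inr hl0.le))).intervalIntegrable _ _)
      intro t ht
      have := hHl t x₀
      have habs : |t - x₀| = t - x₀ := abs_of_nonneg (by linarith [ht.1])
      rwa [habs] at this
    have hnu : |u (x₀ + h) - u x₀| ≤ Cn * h ^ nu₂ := by
      have := hHn (x₀ + h) x₀
      simpa [abs_of_pos hh] using this
    calc Cmu * h = |deriv u x₀ * h| := by
          rw [abs_mul, hx₀, abs_of_pos hh]
      _ ≤ |(u (x₀ + h) - u x₀) - deriv u x₀ * h| + |u (x₀ + h) - u x₀| := by
          have := abs_sub_abs_le_abs_sub (deriv u x₀ * h) (u (x₀ + h) - u x₀)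
          have h4 := abs_sub_comm (deriv u x₀ * h) (u (x₀ + h) - u x₀)
          calc |deriv u x₀ * h|
              ≤ |deriv u x₀ * h - (u (x₀ + h) - u x₀)| + |u (x₀ + h) - u x₀| := by
                have := abs_sub_abs_le_abs_sub (deriv u x₀ * h) (u (x₀ + h) - u x₀)
                linarith [abs_nonneg (u (x₀ + h) - u x₀)]
            _ = |(u (x₀ + h) - u x₀) - deriv u x₀ * h| + |u (x₀ + h) - u x₀| := by
                rw [abs_sub_comm]
      _ ≤ Cl * (h ^ (1 + lam₂) / (1 + lam₂)) + Cn * h ^ nu₂ := by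
          rw [← h1] at *
          exact add_le_add h2 hnu
      _ = Cl * h ^ (1 + lam₂) / (1 + lam₂) + Cn * h ^ nu₂ := by ring
  -- choose h₀ = (Cmu / Cl) ^ (1/lam₂)
  set q : ℝ := Cmu / Cl with hq
  have hq0 : 0 < q := div_pos hCmu hCl
  set h₀ : ℝ := q ^ (1 / lam₂) with hh₀
  have hh0 : 0 < h₀ := Real.rpow_pos_of_pos hq0 _
  have hpow : h₀ ^ lam₂ = q := by
    rw [hh₀, ← Real.rpow_mul hq0.le, one_div_mul_cancel hl0.ne', Real.rpow_one]
  have hkey := key h₀ hh0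
  have h1l : (0:ℝ) < 1 + lam₂ := by linarith
  have hpow1 : h₀ ^ (1 + lam₂) = h₀ * q := by
    rw [Real.rpow_add hh0, Real.rpow_one, hpow]
  rw [hpow1] at hkey
  have hClq : Cl * (h₀ * q) = Cmu * h₀ := by
    rw [hq]; field_simp
  rw [hClq] at hkey
  -- Cmu * h₀ * lam₂ / (1+lam₂) ≤ Cn * h₀ ^ nu₂
  have hstep : Cmu * h₀ * lam₂ / (1 + lam₂) ≤ Cn * h₀ ^ nu₂ := by
    have : Cmu * h₀ - Cmu * h₀ / (1 + lam₂) ≤ Cn * h₀ ^ nu₂ := by linarith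
    calc Cmu * h₀ * lam₂ / (1 + lam₂) = Cmu * h₀ - Cmu * h₀ / (1 + lam₂) := by
          field_simp; ring
      _ ≤ Cn * h₀ ^ nu₂ := this
  set K : ℝ := 1 + 1 / lam₂ with hK
  have hK0 : 0 < K := by positivity
  have hKeq : K = (1 + lam₂) / lam₂ := by
    rw [hK]; field_simp; ring
  have hstep2 : Cmu ≤ K * Cn * h₀ ^ (nu₂ - 1) := by
    have hh : h₀ ^ (nu₂ - 1) = h₀ ^ nu₂ / h₀ := by
      rw [Real.rpow_sub hh0, Real.rpow_one]
    have h2 : Cmu * h₀ * lam₂ ≤ Cn * h₀ ^ nu₂ * (1 + lam₂) := by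
      rw [div_le_iff₀ h1l] at hstep; linarith
    have h3 : (1 + lam₂) / lam₂ * Cn * (h₀ ^ nu₂ / h₀)
        = (Cn * h₀ ^ nu₂ * (1 + lam₂)) / (lam₂ * h₀) := by
      field_simp
    rw [hh, hKeq, h3, le_div_iff₀ (by positivity)]
    calc Cmu * (lam₂ * h₀) = Cmu * h₀ * lam₂ := by ring
      _ ≤ _ := h2
  -- exponent identity
  have hexp : (nu₂ - 1) / lam₂ = -(η / (1 - η)) := by
    have h1η : (0:ℝ) < 1 - η := by linarith
    field_simp
    nlinarith [hrel]
  have hh₀exp : h₀ ^ (nu₂ - 1) = q ^ (-(η / (1 - η))) := by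
    rw [hh₀, ← Real.rpow_mul hq0.le, ← hexp]
    congr 1
    field_simp
  rw [hh₀exp] at hstep2
  set e : ℝ := η / (1 - η) with he
  have he0 : 0 < e := div_pos hη0 (by linarith)
  have hmul : Cmu * q ^ e ≤ K * Cn := by
    have hqe : 0 < q ^ e := Real.rpow_pos_of_pos hq0 _
    calc Cmu * q ^ e ≤ (K * Cn * q ^ (-e)) * q ^ e :=
          mul_le_mul_of_nonneg_right hstep2 hqe.le
      _ = K * Cn * (q ^ (-e) * q ^ e) := by ring
      _ = K * Cn := by
          rw [← Real.rpow_add hq0, neg_add_cancel, Real.rpow_zero, mul_one]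
  have h1η : (0:ℝ) < 1 - η := by linarith
  have hfin := Real.rpow_le_rpow (by positivity) hmul h1η.le
  have hmulexp : e * (1 - η) = η := by rw [he]; field_simp
  have hL : (Cmu * q ^ e) ^ (1 - η) = Cmu / Cl ^ η := by
    rw [Real.mul_rpow hCmu.le (Real.rpow_nonneg hq0.le _),
      ← Real.rpow_mul hq0.le, hmulexp, hq, Real.div_rpow hCmu.le hCl.le,
      mul_div_assoc', ← Real.rpow_add hCmu]
    norm_num
  have hR : (K * Cn) ^ (1 - η) = K ^ (1 - η) * Cn ^ (1 - η) :=
    Real.mul_rpow hK0.le hCn.le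
  rw [hL, hR] at hfin
  rw [div_le_iff₀ (Real.rpow_pos_of_pos hCl η)] at hfin
  calc Cmu ≤ K ^ (1 - η) * Cn ^ (1 - η) * Cl ^ η := hfin
    _ = K ^ (1 - η) * Cl ^ η * Cn ^ (1 - η) := by ring
end

section
/- Let u : ℝ → ℝ be continuously differentiable with |u'(0)| = M > 0 and suppose u' is α-Hölder with constant L > 0, i.e. |u'(x)-u'(y)| ≤ L|x-y|^α for some α ∈ (0,1]. Set R = (M/L)^{1/α}. Then |u(R) - u(0)| ≥ M·R - (L/(α+1))·R^{α+1} = (α/(α+1)) M R. -/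
theorem stmt7 (u : ℝ → ℝ) (M L α R : ℝ) (hu : ContDiff ℝ 1 u)
    (hM : |deriv u 0| = M) (hMpos : 0 < M) (hL : 0 < L) (hα0 : 0 < α) (hα1 : α ≤ 1)
    (hHolder : ∀ x y, |deriv u x - deriv u y| ≤ L * |x - y| ^ α)
    (hR : R = (M / L) ^ (1 / α)) :
    M * R - (L / (α + 1)) * R ^ (α + 1) ≤ |u R - u 0| ∧
    M * R - (L / (α + 1)) * R ^ (α + 1) = (α / (α + 1)) * M * R := by
  have hMLpos : 0 < M / L := div_pos hMpos hL
  have hRpos : 0 < R := by rw [hR]; exact Real.rpow_pos_of_pos hMLpos _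
  have hRα : R ^ α = M / L := by
    rw [hR, ← Real.rpow_mul hMLpos.le, one_div, inv_mul_cancel₀ hα0.ne', Real.rpow_one]
  have hRa1 : R ^ (α + 1) = (M / L) * R := by
    rw [Real.rpow_add hRpos, hRα, Real.rpow_one]
  have heq : M * R - (L / (α + 1)) * R ^ (α + 1) = (α / (α + 1)) * M * R := by
    rw [hRa1]
    have : α + 1 ≠ 0 := by positivity
    field_simp
    ring
  refine ⟨?_, heq⟩
  have hcont : Continuous (deriv u) := hu.continuous_deriv le_rfl
  have hFTC : ∫ x in (0:ℝ)..R, deriv u x = u R - u 0 :=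
    intervalIntegral.integral_deriv_eq_sub
      (fun x _ => (hu.differentiable one_ne_zero).differentiableAt)
      (hcont.intervalIntegrable 0 R)
  have hint1 : IntervalIntegrable (deriv u) MeasureTheory.volume 0 R :=
    hcont.intervalIntegrable 0 R
  have hsplit : ∫ x in (0:ℝ)..R, deriv u x
      = deriv u 0 * R + ∫ x in (0:ℝ)..R, (deriv u x - deriv u 0) := by
    rw [intervalIntegral.integral_sub hint1 intervalIntegrable_const,
      intervalIntegral.integral_const, smul_eq_mul]
    ring
  have hrpow_int : IntervalIntegrable (fun x : ℝ => L * x ^ α) MeasureTheory.volume 0 R :=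
    (intervalIntegral.intervalIntegrable_rpow' (by linarith)).const_mul L
  have hint2 : IntervalIntegrable (fun x => deriv u x - deriv u 0) MeasureTheory.volume 0 R :=
    hint1.sub intervalIntegrable_const
  have hE : |∫ x in (0:ℝ)..R, (deriv u x - deriv u 0)| ≤ (L / (α + 1)) * R ^ (α + 1) := by
    calc |∫ x in (0:ℝ)..R, (deriv u x - deriv u 0)|
        ≤ ∫ x in (0:ℝ)..R, |deriv u x - deriv u 0| :=
          intervalIntegral.abs_integral_le_integral_abs hRpos.le
      _ ≤ ∫ x in (0:ℝ)..R, L * x ^ α := by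
          apply intervalIntegral.integral_mono_on hRpos.le hint2.abs hrpow_int
          intro x hx
          calc |deriv u x - deriv u 0| ≤ L * |x - 0| ^ α := hHolder x 0
            _ = L * x ^ α := by rw [sub_zero, abs_of_nonneg hx.1]
      _ = (L / (α + 1)) * R ^ (α + 1) := by
          rw [intervalIntegral.integral_const_mul, integral_rpow (Or.inl (by linarith)),
            Real.zero_rpow (by positivity)]
          ring
  have habs : M * R = |deriv u 0 * R| := by
    rw [abs_mul, hM, abs_of_pos hRpos]
  have h3 : |deriv u 0 * R| ≤ |u R - u 0| + |∫ x in (0:ℝ)..R, (deriv u x - deriv u 0)| := by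
    have : deriv u 0 * R = (u R - u 0) - ∫ x in (0:ℝ)..R, (deriv u x - deriv u 0) := by
      rw [← hFTC, hsplit]; ring
    rw [this]
    exact abs_sub _ _
  linarith [hE, habs ▸ h3]
end

section
/- (C^k norm interpolation) For nonnegative integers k₁ < k₂ < k₃ and u ∈ C_0^∞(ℝⁿ), with C_j := max over |α| ≤ j of sup_x |D^α u(x)|, there is a constant C independent of u such that C_{k₂} ≤ C · C_{k₁}^η C_{k₃}^{1-η}, where η = (k₃-k₂)/(k₃-k₁). -/
lemma opt_bound {x A B : ℝ} (hA : 0 ≤ A) (hB : 0 ≤ B)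
    (h : ∀ t : ℝ, 0 < t → x ≤ 2*A/t + B*t) : x ≤ 2 * Real.sqrt (2*A*B) := by
  have hs : (0:ℝ) ≤ 2 * Real.sqrt (2*A*B) := by positivity
  rcases eq_or_lt_of_le hA with hA0 | hApos
  · have hx0 : x ≤ 0 := by
      refine le_of_forall_pos_le_add fun ε hε => ?_
      rcases eq_or_lt_of_le hB with hB0 | hBpos
      · have := h 1 one_pos
        rw [← hA0, ← hB0] at this
        linarith
      · have := h (ε / B) (div_pos hε hBpos)
        rw [← hA0] at this
        have : x ≤ B * (ε / B) := by simpa using this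
        rw [mul_div_cancel₀ _ (ne_of_gt hBpos)] at this
        linarith
    linarith
  rcases eq_or_lt_of_le hB with hB0 | hBpos
  · have hx0 : x ≤ 0 := by
      refine le_of_forall_pos_le_add fun ε hε => ?_
      have := h (2*A/ε) (by positivity)
      rw [← hB0] at this
      have he : 2*A/(2*A/ε) = ε := by
        rw [div_div_eq_mul_div, mul_comm, mul_div_assoc, div_self (by positivity), mul_one]
      rw [he] at this
      linarith
    linarith
  · set s := Real.sqrt (2*A*B) with hs_def
    have hspos : 0 < s := Real.sqrt_pos.2 (by positivity)
    have hsq : s^2 = 2*A*B := Real.sq_sqrt (by positivity)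
    have := h (2*A/s) (by positivity)
    have h1 : 2*A/(2*A/s) = s := by
      rw [div_div_eq_mul_div, mul_comm, mul_div_assoc, div_self (by positivity), mul_one]
    have h2 : B*(2*A/s) = s := by
      field_simp
      nlinarith [hsq]
    rw [h1, h2] at this
    linarith
open Set

lemma landau_one_dim (φ ψ χ : ℝ → ℝ) (h1 : ∀ t, HasDerivAt φ (ψ t) t)
    (h2 : ∀ t, HasDerivAt ψ (χ t) t) (A B : ℝ)
    (hA : ∀ t, |φ t| ≤ A) (hB : ∀ t, |χ t| ≤ B) :
    ∀ t : ℝ, 0 < t → |ψ 0| ≤ 2*A/t + B*t := by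
  intro h hh
  obtain ⟨ξ, hξ, hslope⟩ := exists_hasDerivAt_eq_slope φ ψ hh
    (fun t _ => (h1 t).continuousAt.continuousWithinAt) (fun t _ => h1 t)
  have hξ1 : |ψ ξ| ≤ 2*A/h := by
    rw [hslope, sub_zero, abs_div, abs_of_pos hh]
    have hnum : |φ h - φ 0| ≤ 2*A := (abs_sub _ _).trans (by linarith [hA h, hA 0])
    gcongr
  have hξpos : 0 < ξ := hξ.1
  obtain ⟨ζ, hζ, hslope2⟩ := exists_hasDerivAt_eq_slope ψ χ hξpos
    (fun t _ => (h2 t).continuousAt.continuousWithinAt) (fun t _ => h2 t)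
  have hdiff : |ψ ξ - ψ 0| ≤ B * h := by
    rw [sub_zero] at hslope2
    have heq : ψ ξ - ψ 0 = χ ζ * ξ := by
      field_simp at hslope2
      linarith [hslope2]
    rw [heq, abs_mul]
    have hx : |ξ| ≤ h := by rw [abs_of_pos hξpos]; linarith [hξ.2]
    exact mul_le_mul (hB ζ) hx (abs_nonneg _) ((abs_nonneg _).trans (hB ζ))
  have : |ψ 0| ≤ |ψ ξ| + |ψ ξ - ψ 0| := by
    have := abs_sub_abs_le_abs_sub (ψ 0) (ψ ξ)
    have h2' := abs_sub_comm (ψ 0) (ψ ξ)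
    linarith [abs_nonneg (ψ ξ - ψ 0)]
  linarith

lemma discrete_max_principle (D : ℕ → ℝ) (a b : ℕ)
    (hconv : ∀ j, a < j → j < b → 2 * D j ≤ D (j-1) + D (j+1))
    (ha : D a ≤ 0) (hb : D b ≤ 0) : ∀ j, a ≤ j → j ≤ b → D j ≤ 0 := by
  intro j hja hjb
  have hab : a ≤ b := hja.trans hjb
  set S : Finset ℕ := Finset.Icc a b with hS
  have hjS : j ∈ S := Finset.mem_Icc.2 ⟨hja, hjb⟩
  set T : Finset ℕ := S.filter (fun m => ∀ i ∈ S, D i ≤ D m) with hT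
  have hTne : T.Nonempty := by
    obtain ⟨m, hmS, hm⟩ := S.exists_max_image D ⟨j, hjS⟩
    exact ⟨m, Finset.mem_filter.2 ⟨hmS, hm⟩⟩
  set m := T.max' hTne with hm_def
  have hmT : m ∈ T := T.max'_mem hTne
  obtain ⟨hmS, hmmax⟩ := Finset.mem_filter.1 hmT
  obtain ⟨hma, hmb⟩ := Finset.mem_Icc.1 hmS
  -- suffices D m ≤ 0
  have hDm : D m ≤ 0 := by
    by_contra hpos
    push_neg at hpos
    have hma' : a < m := lt_of_le_of_ne hma (by intro h; rw [← h] at hpos; linarith)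
    have hmb' : m < b := lt_of_le_of_ne hmb (by intro h; rw [h] at hpos; linarith)
    have h1 : D (m-1) ≤ D m := hmmax _ (Finset.mem_Icc.2 ⟨by omega, by omega⟩)
    have hm1S : m + 1 ∈ S := Finset.mem_Icc.2 ⟨by omega, by omega⟩
    have h2 : D (m+1) < D m := by
      rcases lt_or_eq_of_le (hmmax _ hm1S) with h | h
      · exact h
      · exfalso
        have : m + 1 ∈ T := Finset.mem_filter.2 ⟨hm1S, fun i hi => (hmmax i hi).trans h.ge⟩
        have := T.le_max' _ this
        omega
    have := hconv m hma' hmb'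
    linarith
  exact (hmmax j hjS).trans hDm

lemma hasDerivAt_iteratedFDeriv_line {E : Type*} [NormedAddCommGroup E] [NormedSpace ℝ E]
    (u : E → ℝ) (hu : ContDiff ℝ (⊤ : ℕ∞) u) (j : ℕ) (x v₀ : E) (w : Fin j → E) (t : ℝ) :
    HasDerivAt (fun s => iteratedFDeriv ℝ j u (x + s • v₀) w)
      (iteratedFDeriv ℝ (j+1) u (x + t • v₀) (Fin.cons v₀ w)) t := by
  have hg : Differentiable ℝ (iteratedFDeriv ℝ j u) :=
    (hu.iteratedFDeriv_right (m := 1) (by exact_mod_cast le_top)).differentiable one_ne_zero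
  have hline : HasDerivAt (fun s : ℝ => x + s • v₀) v₀ t := by
    simpa using ((hasDerivAt_id t).smul_const v₀).const_add x
  have hcomp : HasDerivAt (fun s : ℝ => iteratedFDeriv ℝ j u (x + s • v₀))
      (fderiv ℝ (iteratedFDeriv ℝ j u) (x + t • v₀) v₀) t :=
    (hg _).hasFDerivAt.comp_hasDerivAt t hline
  have h2 := ((ContinuousMultilinearMap.apply ℝ (fun _ : Fin j => E) ℝ
      w).hasFDerivAt.comp_hasDerivAt t hcomp)
  rw [iteratedFDeriv_succ_apply_left, Fin.cons_zero, Fin.tail_cons]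
  exact h2

lemma landau_step {E : Type*} [NormedAddCommGroup E] [NormedSpace ℝ E]
    (u : E → ℝ) (hu : ContDiff ℝ (⊤ : ℕ∞) u) (j : ℕ) (Mj Mj2 : ℝ)
    (hMjnn : 0 ≤ Mj) (hMj2nn : 0 ≤ Mj2)
    (hMj : ∀ y, ‖iteratedFDeriv ℝ j u y‖ ≤ Mj)
    (hMj2 : ∀ y, ‖iteratedFDeriv ℝ (j+2) u y‖ ≤ Mj2) (x : E) :
    ‖iteratedFDeriv ℝ (j+1) u x‖ ≤ 2 * Real.sqrt (2 * Mj * Mj2) := by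
  refine ContinuousMultilinearMap.opNorm_le_bound (by positivity) fun m => ?_
  set v₀ := m 0 with hv₀
  set w := Fin.tail m with hw
  set P : ℝ := ∏ i, ‖w i‖ with hP
  have hPnn : 0 ≤ P := Finset.prod_nonneg fun i _ => norm_nonneg _
  set A : ℝ := Mj * P with hA_def
  set B : ℝ := Mj2 * (‖v₀‖ * (‖v₀‖ * P)) with hB_def
  have hAnn : 0 ≤ A := by positivity
  have hBnn : 0 ≤ B := by positivity
  set φ : ℝ → ℝ := fun t => iteratedFDeriv ℝ j u (x + t • v₀) w with hφ
  set ψ : ℝ → ℝ := fun t => iteratedFDeriv ℝ (j+1) u (x + t • v₀) (Fin.cons v₀ w) with hψ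
  set χ : ℝ → ℝ := fun t => iteratedFDeriv ℝ (j+2) u (x + t • v₀)
      (Fin.cons v₀ (Fin.cons v₀ w)) with hχ
  have h1 : ∀ t, HasDerivAt φ (ψ t) t := fun t =>
    hasDerivAt_iteratedFDeriv_line u hu j x v₀ w t
  have h2 : ∀ t, HasDerivAt ψ (χ t) t := fun t =>
    hasDerivAt_iteratedFDeriv_line u hu (j+1) x v₀ (Fin.cons v₀ w) t
  have hAb : ∀ t, |φ t| ≤ A := by
    intro t
    calc |φ t| ≤ ‖iteratedFDeriv ℝ j u (x + t • v₀)‖ * P :=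
          (iteratedFDeriv ℝ j u (x + t • v₀)).le_opNorm w
      _ ≤ A := mul_le_mul_of_nonneg_right (hMj _) hPnn
  have hBb : ∀ t, |χ t| ≤ B := by
    intro t
    calc |χ t| ≤ ‖iteratedFDeriv ℝ (j+2) u (x + t • v₀)‖ *
          ∏ i, ‖(Fin.cons v₀ (Fin.cons v₀ w) : Fin (j+2) → E) i‖ :=
          (iteratedFDeriv ℝ (j+2) u (x + t • v₀)).le_opNorm _
      _ = ‖iteratedFDeriv ℝ (j+2) u (x + t • v₀)‖ * (‖v₀‖ * (‖v₀‖ * P)) := by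
          congr 1
          rw [Fin.prod_univ_succ, Fin.prod_univ_succ]
          simp [hP]
      _ ≤ B := mul_le_mul_of_nonneg_right (hMj2 _) (by positivity)
  have key : |ψ 0| ≤ 2 * Real.sqrt (2 * A * B) :=
    opt_bound hAnn hBnn (landau_one_dim φ ψ χ h1 h2 A B hAb hBb)
  have hψ0 : ψ 0 = iteratedFDeriv ℝ (j+1) u x m := by
    simp only [hψ, zero_smul, add_zero]
    congr 1
    exact Fin.cons_self_tail m
  have hsqrt : Real.sqrt (2 * A * B) = Real.sqrt (2 * Mj * Mj2) * (‖v₀‖ * P) := by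
    have : 2 * A * B = (2 * Mj * Mj2) * (‖v₀‖ * P)^2 := by
      simp only [hA_def, hB_def]; ring
    rw [this, Real.sqrt_mul (by positivity), Real.sqrt_sq (by positivity)]
  have hprod : (∏ i, ‖m i‖) = ‖v₀‖ * P := by
    rw [Fin.prod_univ_succ]
    rfl
  rw [hprod]
  calc ‖iteratedFDeriv ℝ (j+1) u x m‖ = |ψ 0| := by
        rw [Real.norm_eq_abs, hψ0]
    _ ≤ 2 * Real.sqrt (2 * A * B) := key
    _ = 2 * Real.sqrt (2 * Mj * Mj2) * (‖v₀‖ * P) := by rw [hsqrt]; ring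

lemma log_convex_interp (L : ℕ → ℝ) (c : ℝ) (a b : ℕ) (hab : a < b)
    (hstep : ∀ j, a < j → j < b → 2 * L j ≤ c + L (j-1) + L (j+1)) :
    ∀ j, a ≤ j → j ≤ b →
      ((b:ℝ)-a) * L j ≤ ((b:ℝ)-j)*L a + ((j:ℝ)-a)*L b
        + c/2*((b:ℝ)-a)*((j:ℝ)-a)*((b:ℝ)-j) := by
  have hr : (0:ℝ) < (b:ℝ) - a := by
    have : (a:ℝ) < b := by exact_mod_cast hab
    linarith
  set D : ℕ → ℝ := fun j => ((b:ℝ)-a) * L j - ((b:ℝ)-j) * L a - ((j:ℝ)-a) * L b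
    - c/2*((b:ℝ)-a)*((j:ℝ)-a)*((b:ℝ)-j) with hD
  have key : ∀ j, a ≤ j → j ≤ b → D j ≤ 0 := by
    apply discrete_max_principle D a b
    · intro j hja hjb
      have hj1 : ((j-1:ℕ):ℝ) = (j:ℝ) - 1 := by
        have : 1 ≤ j := by omega
        push_cast [this]
        ring
      have hs := hstep j hja hjb
      have hs' := mul_le_mul_of_nonneg_left hs (le_of_lt hr)
      simp only [hD, hj1]
      push_cast
      nlinarith [hs']
    · simp [hD]
    · simp only [hD]
      ring_nf
      simp
  intro j hja hjb
  have := key j hja hjb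
  simp only [hD] at this
  linarith

lemma zero_of_iteratedFDeriv_eq_zero {E : Type*} [NormedAddCommGroup E] [NormedSpace ℝ E]
    [Nontrivial E] (u : E → ℝ) (hu : ContDiff ℝ (⊤ : ℕ∞) u) (hsupp : HasCompactSupport u) :
    ∀ j : ℕ, (∀ x, iteratedFDeriv ℝ j u x = 0) → ∀ x, u x = 0 := by
  intro j
  induction j with
  | zero =>
    intro h x
    have := congrArg norm (h x)
    rwa [norm_iteratedFDeriv_zero, norm_zero, norm_eq_zero] at this
  | succ j ih =>
    intro h
    apply ih
    have hdiff : Differentiable ℝ (iteratedFDeriv ℝ j u) :=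
      (hu.iteratedFDeriv_right (m := 1) (by exact_mod_cast le_top)).differentiable one_ne_zero
    have hfz : ∀ y, fderiv ℝ (iteratedFDeriv ℝ j u) y = 0 := by
      intro y
      ext v w
      have := h y
      have h2 : iteratedFDeriv ℝ (j+1) u y (Fin.cons v w) = 0 := by rw [this]; rfl
      rw [iteratedFDeriv_succ_apply_left] at h2
      simpa using h2
    have hconst : ∀ y z : E, iteratedFDeriv ℝ j u y = iteratedFDeriv ℝ j u z :=
      fun y z => is_const_of_fderiv_eq_zero hdiff hfz y z
    have hcs : HasCompactSupport (iteratedFDeriv ℝ j u) := hsupp.iteratedFDeriv j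
    obtain ⟨x₀, hx₀⟩ := Set.ne_univ_iff_exists_notMem _ |>.1 hcs.ne_univ
    intro y
    rw [hconst y x₀]
    exact image_eq_zero_of_notMem_tsupport hx₀

lemma rpow_interp_mono {N₁ N₃ : ℝ} (h1 : 0 < N₁) (h3 : 0 < N₃) (h13 : N₁ ≤ N₃)
    {η θ : ℝ} (hηθ : η ≤ θ) : N₁^θ * N₃^(1-θ) ≤ N₁^η * N₃^(1-η) := by
  have hq : N₁/N₃ ≤ 1 := (div_le_one h3).2 h13
  have hqpos : 0 < N₁/N₃ := div_pos h1 h3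
  have key : (N₁/N₃)^θ ≤ (N₁/N₃)^η := Real.rpow_le_rpow_of_exponent_ge hqpos hq hηθ
  have e : ∀ ξ : ℝ, N₁^ξ * N₃^(1-ξ) = (N₁/N₃)^ξ * N₃ := by
    intro ξ
    rw [Real.div_rpow h1.le h3.le, Real.rpow_sub h3, Real.rpow_one]
    field_simp
  rw [e θ, e η]
  exact mul_le_mul_of_nonneg_right key h3.le

noncomputable def cKNorm {n : ℕ} (j : ℕ) (u : (Fin n → ℝ) → ℝ) : ℝ :=
  ⨆ i : Fin (j + 1), ⨆ x, ‖iteratedFDeriv ℝ i u x‖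

theorem stmt12 {n : ℕ} (k₁ k₂ k₃ : ℕ) (h12 : k₁ < k₂) (h23 : k₂ < k₃) (η : ℝ)
    (hη : η = ((k₃ : ℝ) - k₂) / ((k₃ : ℝ) - k₁)) :
    ∃ C : ℝ, 0 < C ∧ ∀ u : (Fin n → ℝ) → ℝ, ContDiff ℝ (⊤ : ℕ∞) u → HasCompactSupport u →
      cKNorm k₂ u ≤ C * (cKNorm k₁ u) ^ η * (cKNorm k₃ u) ^ (1 - η) := by
  have hc13 : (k₁:ℝ) < k₃ := by exact_mod_cast h12.trans h23
  have hc12 : (k₁:ℝ) < k₂ := by exact_mod_cast h12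
  have hc23 : (k₂:ℝ) < k₃ := by exact_mod_cast h23
  have hr : (0:ℝ) < (k₃:ℝ) - k₁ := by linarith
  have hηpos : 0 < η := by rw [hη]; exact div_pos (by linarith) hr
  have hη1 : η < 1 := by
    rw [hη, div_lt_one hr]; linarith
  set c : ℝ := Real.log 8 with hc
  have hcpos : 0 < c := Real.log_pos (by norm_num)
  set C : ℝ := Real.exp (c/2 * ((k₃:ℝ) - k₁)^2) with hC
  have hC1 : 1 ≤ C := by
    rw [hC, ← Real.exp_zero]
    exact Real.exp_le_exp.2 (by positivity)
  refine ⟨C, lt_of_lt_of_le one_pos hC1, ?_⟩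
  intro u hu hsupp
  -- trivial case u = 0
  by_cases hu0 : ∀ x, u x = 0
  · have hueq : u = fun _ => 0 := funext hu0
    have hck : ∀ k : ℕ, cKNorm k u = 0 := by
      intro k
      unfold cKNorm
      rw [hueq]
      simp only [iteratedFDeriv_zero_fun]
      simp [ciSup_const]
    rw [hck k₁, hck k₂, hck k₃, Real.zero_rpow (ne_of_gt hηpos),
      Real.zero_rpow (by intro h; linarith [h, hη1] : (1 - η) ≠ 0)]
    simp
  push_neg at hu0
  obtain ⟨x₀, hx₀⟩ := hu0
  -- basic facts about M
  set M : ℕ → ℝ := fun j => ⨆ x, ‖iteratedFDeriv ℝ j u x‖ with hM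
  have hbdd : ∀ j, BddAbove (Set.range fun x => ‖iteratedFDeriv ℝ j u x‖) := by
    intro j
    have hcont : Continuous (iteratedFDeriv ℝ j u) :=
      (hu.iteratedFDeriv_right (m := 0) (by exact_mod_cast le_top)).continuous
    exact hcont.norm.bddAbove_range_of_hasCompactSupport (hsupp.iteratedFDeriv j).norm
  have hle : ∀ j x, ‖iteratedFDeriv ℝ j u x‖ ≤ M j := fun j x => le_ciSup (hbdd j) x
  have hMnn : ∀ j, 0 ≤ M j := fun j => Real.iSup_nonneg fun x => norm_nonneg _
  have hckeq : ∀ k : ℕ, cKNorm k u = ⨆ i : Fin (k+1), M i := fun k => rfl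
  have hbddF : ∀ k : ℕ, BddAbove (Set.range fun i : Fin (k+1) => M i) :=
    fun k => (Set.finite_range _).bddAbove
  have hMleck : ∀ j k : ℕ, j ≤ k → M j ≤ cKNorm k u := by
    intro j k hjk
    rw [hckeq]
    exact le_ciSup (hbddF k) (⟨j, by omega⟩ : Fin (k+1))
  have hckmono : cKNorm k₁ u ≤ cKNorm k₃ u := by
    rw [hckeq k₁]
    exact ciSup_le fun i => hMleck i k₃ (by omega)
  have hM0pos : 0 < M 0 := by
    have := hle 0 x₀
    have h2 : ‖iteratedFDeriv ℝ 0 u x₀‖ = ‖u x₀‖ := norm_iteratedFDeriv_zero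
    have : 0 < ‖u x₀‖ := norm_pos_iff.2 hx₀
    linarith [hle 0 x₀, h2 ▸ hle 0 x₀]
  rcases Nat.eq_zero_or_pos n with hn | hn
  · -- n = 0 : all higher derivatives vanish
    subst hn
    have hzero : ∀ j : ℕ, 1 ≤ j → M j = 0 := by
      intro j hj
      have hz : ∀ x, ‖iteratedFDeriv ℝ j u x‖ = 0 := by
        intro x
        match j, hj with
        | (m+1), _ =>
          have : iteratedFDeriv ℝ (m+1) u x = 0 := by
            ext v
            rw [(iteratedFDeriv ℝ (m+1) u x).map_coord_zero 0 (Subsingleton.elim _ _)]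
            rfl
          rw [this, norm_zero]
      have : (fun x => ‖iteratedFDeriv ℝ j u x‖) = fun _ => (0:ℝ) := funext hz
      rw [hM]
      simp only [this]
      exact ciSup_const
    have hckM0 : ∀ k : ℕ, cKNorm k u = M 0 := by
      intro k
      rw [hckeq]
      apply le_antisymm
      · apply ciSup_le
        intro i
        rcases Nat.eq_zero_or_pos (i : ℕ) with h0 | h1
        · rw [h0]
        · rw [hzero _ h1]; exact hMnn 0
      · exact le_ciSup (hbddF k) (⟨0, by omega⟩ : Fin (k+1))
    rw [hckM0, hckM0, hckM0]
    have hpow : M 0 ^ η * M 0 ^ (1-η) = M 0 := by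
      rw [← Real.rpow_add hM0pos]; norm_num
    rw [mul_assoc, hpow]
    nlinarith [hM0pos, hC1]
  · -- main case : n ≥ 1
    haveI : Nonempty (Fin n) := ⟨⟨0, hn⟩⟩
    have hMpos : ∀ j, 0 < M j := by
      intro j
      rcases (hMnn j).lt_or_eq with h | h
      · exact h
      · exfalso
        have hz : ∀ x, iteratedFDeriv ℝ j u x = 0 := by
          intro x
          have h2 := hle j x
          rw [← h] at h2
          exact norm_le_zero_iff.1 h2
        exact hx₀ (zero_of_iteratedFDeriv_eq_zero u hu hsupp j hz x₀)
    set L : ℕ → ℝ := fun j => Real.log (M j) with hL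
    have hstep : ∀ j, k₁ < j → j < k₃ → 2 * L j ≤ c + L (j-1) + L (j+1) := by
      intro j hj1 hj3
      have hj : 1 ≤ j := by omega
      have hMj : M j ≤ 2 * Real.sqrt (2 * M (j-1) * M (j+1)) := by
        apply ciSup_le
        intro x
        have hls := landau_step u hu (j-1) (M (j-1)) (M (j-1+2)) (hMnn _) (hMnn _)
          (hle (j-1)) (hle (j-1+2)) x
        have hj1' : j - 1 + 1 = j := by omega
        have hj2' : j - 1 + 2 = j + 1 := by omega
        rw [hj1', hj2'] at hls
        exact hls
      have hsq : (M j)^2 ≤ 8 * M (j-1) * M (j+1) := by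
        have h2 : (2 * Real.sqrt (2 * M (j-1) * M (j+1)))^2 = 8 * M (j-1) * M (j+1) := by
          rw [mul_pow, Real.sq_sqrt (mul_nonneg (mul_nonneg (by norm_num) (hMnn _)) (hMnn _))]
          ring
        nlinarith [hMj, hMnn j, Real.sqrt_nonneg (2 * M (j-1) * M (j+1))]
      have hlog := Real.log_le_log (pow_pos (hMpos j) 2) hsq
      rw [Real.log_pow, Real.log_mul (mul_ne_zero (by norm_num) (ne_of_gt (hMpos (j-1)))) (ne_of_gt (hMpos (j+1))),
        Real.log_mul (by norm_num) (ne_of_gt (hMpos (j-1)))] at hlog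
      push_cast at hlog
      simp only [hL, hc]
      linarith
    have interp := log_convex_interp L c k₁ k₃ (h12.trans h23) hstep
    have hN1pos : 0 < cKNorm k₁ u := lt_of_lt_of_le (hMpos 0) (hMleck 0 k₁ (by omega))
    have hN3pos : 0 < cKNorm k₃ u := lt_of_lt_of_le (hMpos 0) (hMleck 0 k₃ (by omega))
    rw [hckeq k₂]
    apply ciSup_le
    intro i
    set j := (i : ℕ) with hj_def
    have hj2 : j ≤ k₂ := by omega
    rcases le_or_gt j k₁ with hjk1 | hjk1
    · have heq : cKNorm k₁ u = (cKNorm k₁ u)^η * (cKNorm k₁ u)^(1-η) := by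
        rw [← Real.rpow_add hN1pos]; norm_num
      calc M j ≤ cKNorm k₁ u := hMleck j k₁ hjk1
        _ = (cKNorm k₁ u)^η * (cKNorm k₁ u)^(1-η) := heq
        _ ≤ (cKNorm k₁ u)^η * (cKNorm k₃ u)^(1-η) :=
            mul_le_mul_of_nonneg_left
              (Real.rpow_le_rpow hN1pos.le hckmono (by linarith)) (Real.rpow_nonneg hN1pos.le _)
        _ ≤ C * ((cKNorm k₁ u)^η * (cKNorm k₃ u)^(1-η)) :=
            le_mul_of_one_le_left (by positivity) hC1
        _ = C * (cKNorm k₁ u)^η * (cKNorm k₃ u)^(1-η) := by ring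
    · set θ : ℝ := ((k₃:ℝ) - j)/((k₃:ℝ) - k₁) with hθ
      have hjc : (k₁:ℝ) < (j:ℝ) := by exact_mod_cast hjk1
      have hjc2 : (j:ℝ) ≤ (k₂:ℝ) := by exact_mod_cast hj2
      have hjc3 : (j:ℝ) < k₃ := by
        have : j < k₃ := by omega
        exact_mod_cast this
      have hθnn : 0 ≤ θ := div_nonneg (by linarith) hr.le
      have hτnn : 0 ≤ 1 - θ := by
        rw [hθ, sub_nonneg, div_le_one hr]; linarith
      have hηθ : η ≤ θ := by
        rw [hη, hθ]
        gcongr <;> linarith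
      have hLj : L j ≤ (((k₃:ℝ)-j)*L k₁ + ((j:ℝ)-k₁)*L k₃
          + c/2*((k₃:ℝ)-k₁)*((j:ℝ)-k₁)*((k₃:ℝ)-j)) / ((k₃:ℝ)-k₁) := by
        rw [le_div_iff₀ hr, mul_comm]
        exact interp j hjk1.le (by omega)
      have hMj : M j ≤ Real.exp (θ * L k₁ + (1-θ) * L k₃
          + c/2*((j:ℝ)-k₁)*((k₃:ℝ)-j)) := by
        have hexp : (((k₃:ℝ)-j)*L k₁ + ((j:ℝ)-k₁)*L k₃
            + c/2*((k₃:ℝ)-k₁)*((j:ℝ)-k₁)*((k₃:ℝ)-j)) / ((k₃:ℝ)-k₁)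
            = θ * L k₁ + (1-θ) * L k₃ + c/2*((j:ℝ)-k₁)*((k₃:ℝ)-j) := by
          rw [hθ]
          field_simp
          ring
        rw [← hexp]
        calc M j = Real.exp (L j) := (Real.exp_log (hMpos j)).symm
          _ ≤ _ := Real.exp_le_exp.2 hLj
      have hsplit : Real.exp (θ * L k₁ + (1-θ) * L k₃ + c/2*((j:ℝ)-k₁)*((k₃:ℝ)-j))
          = (M k₁)^θ * (M k₃)^(1-θ) * Real.exp (c/2*((j:ℝ)-k₁)*((k₃:ℝ)-j)) := by
        rw [Real.exp_add, Real.exp_add,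
          Real.rpow_def_of_pos (hMpos k₁), Real.rpow_def_of_pos (hMpos k₃),
          mul_comm θ, mul_comm (1-θ)]
      have hCbound : Real.exp (c/2*((j:ℝ)-k₁)*((k₃:ℝ)-j)) ≤ C := by
        rw [hC]
        apply Real.exp_le_exp.2
        have hA : (0:ℝ) ≤ (j:ℝ)-k₁ := by linarith
        have hB : (0:ℝ) ≤ (k₃:ℝ)-j := by linarith
        have hmm := mul_le_mul (by linarith : (j:ℝ)-k₁ ≤ (k₃:ℝ)-k₁)
          (by linarith : (k₃:ℝ)-j ≤ (k₃:ℝ)-k₁) hB (by linarith)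
        have hmm2 := mul_le_mul_of_nonneg_left hmm (by linarith : (0:ℝ) ≤ c/2)
        calc c/2*((j:ℝ)-k₁)*((k₃:ℝ)-j) = c/2*(((j:ℝ)-k₁)*((k₃:ℝ)-j)) := by ring
          _ ≤ c/2*(((k₃:ℝ)-k₁)*((k₃:ℝ)-k₁)) := hmm2
          _ = c/2*((k₃:ℝ)-k₁)^2 := by ring
      have hfin1 : (M k₁)^θ ≤ (cKNorm k₁ u)^θ :=
        Real.rpow_le_rpow (hMpos k₁).le (hMleck k₁ k₁ le_rfl) hθnn
      have hfin3 : (M k₃)^(1-θ) ≤ (cKNorm k₃ u)^(1-θ) :=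
        Real.rpow_le_rpow (hMpos k₃).le (hMleck k₃ k₃ le_rfl) hτnn
      calc M j ≤ (M k₁)^θ * (M k₃)^(1-θ) * Real.exp (c/2*((j:ℝ)-k₁)*((k₃:ℝ)-j)) := by
            rw [← hsplit]; exact hMj
        _ ≤ (cKNorm k₁ u)^θ * (cKNorm k₃ u)^(1-θ) * C := by
            apply mul_le_mul _ hCbound (Real.exp_pos _).le (by positivity)
            exact mul_le_mul hfin1 hfin3 (Real.rpow_nonneg (hMpos k₃).le _)
              (Real.rpow_nonneg hN1pos.le _)
        _ ≤ (cKNorm k₁ u)^η * (cKNorm k₃ u)^(1-η) * C := by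
            apply mul_le_mul_of_nonneg_right _ (by positivity)
            exact rpow_interp_mono hN1pos hN3pos hckmono hηθ
        _ = C * (cKNorm k₁ u)^η * (cKNorm k₃ u)^(1-η) := by ring
end

section
/- Let f : ℝ → ℝ be C¹ with f' being α-Hölder with seminorm L (α ∈ (0,1], L > 0), and let f be β-Hölder with seminorm K (β ∈ (0,1)), with the compatibility condition (β-1)/α = -η/(1-η) for some η ∈ (0,1). Then sup |f'| ≤ (1 + 1/α)^{1-η} L^η K^{1-η}, assuming the supremum M = sup|f'| is finite and attained. -/
open intervalIntegral in
lemma keyB18 (f : ℝ → ℝ) (α β L K M : ℝ) (hf : ContDiff ℝ 1 f) (hα0 : 0 < α)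
    (hLh : ∀ x y, |deriv f x - deriv f y| ≤ L * |x - y| ^ α)
    (hK : ∀ x y, |f x - f y| ≤ K * |x - y| ^ β)
    (x₀ : ℝ) (hx : deriv f x₀ = M) :
    ∀ h : ℝ, 0 < h → M ≤ K * h ^ (β - 1) + L / (α + 1) * h ^ α := by
  intro h hh
  have hd : Differentiable ℝ f := hf.differentiable one_ne_zero
  have hderiv : Continuous (deriv f) := hf.continuous_deriv le_rfl
  have hcont : Continuous fun s : ℝ => s ^ α := Real.continuous_rpow_const hα0.le
  have hg : Continuous fun t : ℝ => M - L * (t - x₀) ^ α :=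
    continuous_const.sub (continuous_const.mul (hcont.comp (continuous_id.sub continuous_const)))
  have hint : ∫ t in x₀..(x₀ + h), deriv f t = f (x₀ + h) - f x₀ :=
    integral_deriv_eq_sub (fun x _ => hd x) (hderiv.intervalIntegrable _ _)
  have hmono : ∫ t in x₀..(x₀ + h), (M - L * (t - x₀) ^ α) ≤ ∫ t in x₀..(x₀ + h), deriv f t := by
    apply integral_mono_on (by linarith) (hg.intervalIntegrable _ _)
      (hderiv.intervalIntegrable _ _)
    intro t ht
    have h1 := hLh x₀ t
    have h2 : |x₀ - t| = t - x₀ := by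
      rw [abs_sub_comm, abs_of_nonneg (by linarith [ht.1])]
    rw [h2, hx] at h1
    have h3 : M - deriv f t ≤ L * (t - x₀) ^ α := le_trans (le_abs_self _) h1
    linarith
  have hcomp : (∫ t in x₀..(x₀ + h), (t - x₀) ^ α) = ∫ s in (0:ℝ)..h, s ^ α := by
    have := integral_comp_sub_right (a := x₀) (b := x₀ + h) (fun s => s ^ α) x₀
    simpa using this
  have hval : (∫ s in (0:ℝ)..h, s ^ α) = h ^ (α + 1) / (α + 1) := by
    rw [integral_rpow (Or.inl (by linarith))]
    rw [Real.zero_rpow (by positivity)]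
    ring
  have hcalc : (∫ t in x₀..(x₀ + h), (M - L * (t - x₀) ^ α))
      = M * h - L * (h ^ (α + 1) / (α + 1)) := by
    have hc2 : Continuous fun t : ℝ => L * (t - x₀) ^ α :=
      continuous_const.mul (hcont.comp (continuous_id.sub continuous_const))
    rw [integral_sub intervalIntegrable_const (hc2.intervalIntegrable _ _),
      integral_const, integral_const_mul, hcomp, hval]
    simp only [smul_eq_mul]
    ring
  have hfb : f (x₀ + h) - f x₀ ≤ K * h ^ β := by
    calc f (x₀ + h) - f x₀ ≤ |f (x₀ + h) - f x₀| := le_abs_self _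
    _ ≤ K * |x₀ + h - x₀| ^ β := hK _ _
    _ = K * h ^ β := by rw [show x₀ + h - x₀ = h by ring, abs_of_pos hh]
  rw [hcalc, hint] at hmono
  have hmain : M * h ≤ K * h ^ β + L * (h ^ (α + 1) / (α + 1)) := by linarith
  have e1 : h ^ (β - 1) * h = h ^ β := by
    rw [← Real.rpow_add_one (ne_of_gt hh) (β - 1)]; ring_nf
  have e2 : h ^ α * h = h ^ (α + 1) := (Real.rpow_add_one (ne_of_gt hh) α).symm
  have hmain2 : M * h ≤ (K * h ^ (β - 1) + L / (α + 1) * h ^ α) * h := by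
    have : (K * h ^ (β - 1) + L / (α + 1) * h ^ α) * h
        = K * (h ^ (β - 1) * h) + L * ((h ^ α * h) / (α + 1)) := by ring
    rw [this, e1, e2]; linarith
  exact le_of_mul_le_mul_right hmain2 hh

lemma finalB18 (α β η L K M : ℝ) (hα0 : 0 < α) (hη0 : 0 < η) (hη1 : η < 1)
    (hrel : (β - 1) / α = -η / (1 - η)) (hL : 0 < L) (hK0 : 0 < K)
    (key : ∀ h : ℝ, 0 < h → M ≤ K * h ^ (β - 1) + L / (α + 1) * h ^ α) :
    M ≤ (1 + 1 / α) ^ (1 - η) * L ^ η * K ^ (1 - η) := by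
  have hη1' : 0 < 1 - η := by linarith
  have ha : (0:ℝ) < α + 1 := by linarith
  set a := α + 1 with ha_def
  set D := η * K * a / ((1 - η) * L) with hD_def
  have hD : 0 < D := by positivity
  set h := D ^ ((1 - η) / α) with hh_def
  have hh : 0 < h := Real.rpow_pos_of_pos hD _
  have e1 : h ^ α = D ^ (1 - η) := by
    rw [hh_def, ← Real.rpow_mul hD.le]
    congr 1
    field_simp
  have e2 : h ^ (β - 1) = D ^ (-η) := by
    rw [hh_def, ← Real.rpow_mul hD.le]
    congr 1
    have hα : α ≠ 0 := ne_of_gt hα0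
    have hη' : (1:ℝ) - η ≠ 0 := ne_of_gt hη1'
    field_simp at hrel ⊢
    linear_combination hrel
  have hkey := key h hh
  rw [e1, e2] at hkey
  have hbase : (1:ℝ) + 1 / α = a / α := by rw [ha_def]; field_simp
  rw [hbase]
  -- the AM-GM fact in log form
  have hlog : (1 - η) * Real.log α ≤ Real.log a + η * Real.log η + (1 - η) * Real.log (1 - η) := by
    have amgm := Real.geom_mean_le_arith_mean2_weighted hη1'.le hη0.le
      (by positivity : (0:ℝ) ≤ α / (1 - η)) (by positivity : (0:ℝ) ≤ 1 / η) (by ring)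
    have hsum : (1 - η) * (α / (1 - η)) + η * (1 / η) = a := by
      rw [ha_def]; field_simp
    rw [hsum] at amgm
    have hpos : (0:ℝ) < (α / (1 - η)) ^ (1 - η) * (1 / η) ^ η := by positivity
    have hl := Real.log_le_log hpos amgm
    rw [Real.log_mul (by positivity) (by positivity),
      Real.log_rpow (by positivity), Real.log_rpow (by positivity),
      Real.log_div (ne_of_gt hα0) (ne_of_gt hη1'), one_div, Real.log_inv] at hl
    nlinarith [hl]
  have lD : Real.log D = Real.log η + Real.log K + Real.log a
      - (Real.log (1 - η) + Real.log L) := by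
    rw [hD_def, Real.log_div (by positivity) (by positivity),
      Real.log_mul (by positivity) (ne_of_gt ha),
      Real.log_mul (ne_of_gt hη0) (ne_of_gt hK0),
      Real.log_mul (ne_of_gt hη1') (ne_of_gt hL)]
  set T := (a / α) ^ (1 - η) * L ^ η * K ^ (1 - η) with hT_def
  have hT : 0 < T := by positivity
  have lT : Real.log T = (1 - η) * (Real.log a - Real.log α) + η * Real.log L
      + (1 - η) * Real.log K := by
    rw [hT_def, Real.log_mul (by positivity) (by positivity),
      Real.log_mul (by positivity) (by positivity),
      Real.log_rpow (by positivity), Real.log_rpow hL, Real.log_rpow hK0,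
      Real.log_div (ne_of_gt ha) (ne_of_gt hα0)]
  have b1 : K * D ^ (-η) ≤ (1 - η) * T := by
    rw [← Real.log_le_log_iff (by positivity) (by positivity),
      Real.log_mul (ne_of_gt hK0) (by positivity),
      Real.log_mul (ne_of_gt hη1') (ne_of_gt hT),
      Real.log_rpow hD, lD, lT]
    nlinarith [hlog]
  have b2 : L / a * D ^ (1 - η) ≤ η * T := by
    rw [← Real.log_le_log_iff (by positivity) (by positivity),
      Real.log_mul (by positivity) (by positivity),
      Real.log_mul (ne_of_gt hη0) (ne_of_gt hT),
      Real.log_rpow hD, Real.log_div (ne_of_gt hL) (ne_of_gt ha), lD, lT]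
    nlinarith [hlog]
  calc M ≤ K * D ^ (-η) + L / a * D ^ (1 - η) := hkey
  _ ≤ (1 - η) * T + η * T := add_le_add b1 b2
  _ = T := by ring

theorem stmt18 (f : ℝ → ℝ) (α β η L K M : ℝ)
    (hf : ContDiff ℝ 1 f) (hα0 : 0 < α) (hα1 : α ≤ 1) (hβ0 : 0 < β) (hβ1 : β < 1)
    (hη0 : 0 < η) (hη1 : η < 1) (hrel : (β - 1) / α = -η / (1 - η))
    (hL : 0 < L) (hLh : ∀ x y, |deriv f x - deriv f y| ≤ L * |x - y| ^ α)
    (hK : ∀ x y, |f x - f y| ≤ K * |x - y| ^ β)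
    (hM : ∀ x, |deriv f x| ≤ M) (hMatt : ∃ x, |deriv f x| = M) :
    M ≤ (1 + 1 / α) ^ (1 - η) * L ^ η * K ^ (1 - η) := by
  obtain ⟨x₀, hx₀⟩ := hMatt
  have hM0 : 0 ≤ M := le_trans (abs_nonneg _) (hM x₀)
  have hK0 : 0 ≤ K := by
    have h01 := hK 0 1
    rw [show |(0:ℝ) - 1| = 1 by norm_num, Real.one_rpow, mul_one] at h01
    exact le_trans (abs_nonneg _) h01
  rcases eq_or_lt_of_le hK0 with hK0' | hK0'
  · -- K = 0 : f is constant, M = 0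
    have hconst : ∀ x y : ℝ, f x = f y := by
      intro x y
      have := hK x y
      rw [← hK0', zero_mul] at this
      have := le_antisymm this (abs_nonneg _)
      exact sub_eq_zero.mp (abs_eq_zero.mp this)
    have hM0' : M = 0 := by
      have hf0 : f = fun _ => f 0 := funext fun x => hconst x 0
      rw [hf0, deriv_const, abs_zero] at hx₀
      exact hx₀.symm
    rw [hM0', ← hK0', Real.zero_rpow (by linarith : (1:ℝ) - η ≠ 0), mul_zero]
  · -- K > 0
    rcases (abs_eq hM0).mp hx₀ with hsgn | hsgn
    · exact finalB18 α β η L K M hα0 hη0 hη1 hrel hL hK0'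
        (keyB18 f α β L K M hf hα0 hLh hK x₀ hsgn)
    · have hgC : ContDiff ℝ 1 (fun x => -f x) := hf.neg
      have hgd : ∀ x, deriv (fun y => -f y) x = -deriv f x := fun x => deriv.neg
      refine finalB18 α β η L K M hα0 hη0 hη1 hrel hL hK0'
        (keyB18 (fun x => -f x) α β L K M hgC hα0 ?_ ?_ x₀ ?_)
      · intro x y
        rw [hgd, hgd, show -deriv f x - -deriv f y = -(deriv f x - deriv f y) by ring, abs_neg]
        exact hLh x y
      · intro x y
        rw [show -f x - -f y = -(f x - f y) by ring, abs_neg]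
        exact hK x y
      · rw [hgd, hsgn, neg_neg]
end
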